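/- For every n ≥ 1 there is no constant κ > 0 such that d_H(X, Y) ≤ κ·d_AIRM(X, Y) for all X, Y ∈ VPM°(n); i.e., the Hilbert VPM distance admits no upper bound by a constant multiple of the restricted affine-invariant Riemannian distance. -/

import Mathlib

open Matrix

/-- The open variance-precision bicone VPM°(n): symmetric matrices `X` with
`X` and `I - X` positive definite. -/
def VPM (n : ℕ) : Set (Matrix (Fin n) (Fin n) ℝ) :=
  {X | X.PosDef ∧ (1 - X).PosDef}

/-- Largest (real) eigenvalue of a matrix, as the supremum of its real spectrum. -/
noncomputable def lmax {n : ℕ} (S : Matrix (Fin n) (Fin n) ℝ) : ℝ := sSup (spectrum ℝ S)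

/-- Smallest (real) eigenvalue of a matrix, as the infimum of its real spectrum. -/
noncomputable def lmin {n : ℕ} (S : Matrix (Fin n) (Fin n) ℝ) : ℝ := sInf (spectrum ℝ S)

/-- Hilbert VPM distance. -/
noncomputable def dH {n : ℕ} (J₁ J₂ : Matrix (Fin n) (Fin n) ℝ) : ℝ :=
  Real.log (max (lmax (J₂⁻¹ * J₁)) (lmax ((1 - J₂)⁻¹ * (1 - J₁))) /
            min (lmin (J₂⁻¹ * J₁)) (lmin ((1 - J₂)⁻¹ * (1 - J₁))))

lemma isHermitian_conj {n : ℕ} {B P : Matrix (Fin n) (Fin n) ℝ}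
    (hB : B.IsHermitian) (hP : P.IsHermitian) : (B * P * B).IsHermitian := by
  have h := Matrix.isHermitian_mul_mul_conjTranspose B hP
  rwa [hB] at h

namespace Matrix.PosSemidef
open scoped ComplexOrder
variable {n : Type*} [Fintype n] [DecidableEq n] {𝕜 : Type*} [RCLike 𝕜] {A : Matrix n n 𝕜}
noncomputable def sqrt (hA : A.PosSemidef) : Matrix n n 𝕜 :=
  (hA.1.eigenvectorUnitary : Matrix n n 𝕜) * diagonal ((↑) ∘ (√·) ∘ hA.1.eigenvalues) *
    (star hA.1.eigenvectorUnitary : Matrix n n 𝕜)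
lemma posSemidef_sqrt (hA : A.PosSemidef) : PosSemidef hA.sqrt := by
  have h : (diagonal ((↑) ∘ (√·) ∘ hA.1.eigenvalues) : Matrix n n 𝕜).PosSemidef :=
    posSemidef_diagonal_iff.mpr fun i ↦ by simp [Real.sqrt_nonneg]
  simpa [sqrt, Unitary.coe_star, Matrix.star_eq_conjTranspose] using
    h.mul_mul_conjTranspose_same (hA.1.eigenvectorUnitary : Matrix n n 𝕜)
end Matrix.PosSemidef

/-- Affine-invariant Riemannian distance on PD(n):
`d_AIRM(P,Q) = sqrt(Σ_i log² λ_i(Q^{−1/2} P Q^{−1/2}))`, the eigenvalues taken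
with multiplicity. -/
noncomputable def dAIRM {n : ℕ} {P Q : Matrix (Fin n) (Fin n) ℝ}
    (hP : P.PosDef) (hQ : Q.PosDef) : ℝ :=
  Real.sqrt (∑ i, Real.log
    ((isHermitian_conj hQ.posSemidef.posSemidef_sqrt.isHermitian.inv
        hP.isHermitian).eigenvalues i) ^ 2)

lemma aux_posDef_smul_one {n : ℕ} {c : ℝ} (hc : 0 < c) :
    (c • (1 : Matrix (Fin n) (Fin n) ℝ)).PosDef := by
  rw [Matrix.smul_one_eq_diagonal]
  exact Matrix.posDef_diagonal_iff.mpr fun _ => hc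

lemma aux_spectrum_smul_one {n : ℕ} (hn : 1 ≤ n) (c : ℝ) :
    spectrum ℝ (c • (1 : Matrix (Fin n) (Fin n) ℝ)) = {c} := by
  have : Nonempty (Fin n) := ⟨⟨0, hn⟩⟩
  rw [Matrix.smul_one_eq_diagonal, spectrum_diagonal, Set.range_const]

lemma aux_lmax_smul_one {n : ℕ} (hn : 1 ≤ n) (c : ℝ) :
    lmax (c • (1 : Matrix (Fin n) (Fin n) ℝ)) = c := by
  rw [lmax, aux_spectrum_smul_one hn, csSup_singleton]

lemma aux_lmin_smul_one {n : ℕ} (hn : 1 ≤ n) (c : ℝ) :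
    lmin (c • (1 : Matrix (Fin n) (Fin n) ℝ)) = c := by
  rw [lmin, aux_spectrum_smul_one hn, csInf_singleton]

lemma aux_smul_one_mul {n : ℕ} (a b : ℝ) :
    (a • (1 : Matrix (Fin n) (Fin n) ℝ)) * (b • 1) = (a * b) • 1 := by
  rw [Matrix.smul_mul, Matrix.mul_smul, one_mul, smul_smul]

lemma aux_smul_one_inv {n : ℕ} {c : ℝ} (hc : c ≠ 0) :
    (c • (1 : Matrix (Fin n) (Fin n) ℝ))⁻¹ = c⁻¹ • 1 := by
  apply Matrix.inv_eq_right_inv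
  rw [aux_smul_one_mul, mul_inv_cancel₀ hc, one_smul]

lemma aux_one_sub_smul_one {n : ℕ} (t : ℝ) :
    1 - t • (1 : Matrix (Fin n) (Fin n) ℝ) = (1 - t) • 1 := by
  rw [sub_smul, one_smul]

lemma aux_eig_scalar {n : ℕ} (hn : 1 ≤ n) {M : Matrix (Fin n) (Fin n) ℝ}
    (hM : M.IsHermitian) {c : ℝ} (h : M = c • 1) (i : Fin n) :
    hM.eigenvalues i = c := by
  subst h
  have := hM.eigenvalues_mem_spectrum_real i
  rwa [aux_spectrum_smul_one hn, Set.mem_singleton_iff] at this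

lemma aux_sqrt_smul_one {n : ℕ} {c : ℝ} (hc : 0 ≤ c)
    (h : (c • (1 : Matrix (Fin n) (Fin n) ℝ)).PosSemidef) :
    h.sqrt = Real.sqrt c • 1 := by
  have hd : (diagonal ((RCLike.ofReal : ℝ → ℝ) ∘ (√·) ∘ h.1.eigenvalues) :
      Matrix (Fin n) (Fin n) ℝ) = Real.sqrt c • 1 := by
    rw [Matrix.smul_one_eq_diagonal (Real.sqrt c)]
    congr 1
    funext i
    simp [aux_eig_scalar (by have := i.2; omega) h.1 rfl i]
  rw [Matrix.PosSemidef.sqrt, hd, Matrix.mul_smul, mul_one, Matrix.smul_mul,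
    Unitary.mul_star_self_of_mem (h.1.eigenvectorUnitary).2]

lemma aux_dH_scalar {n : ℕ} (hn : 1 ≤ n) {t : ℝ} (ht1 : 1 / 2 < t) (ht2 : t < 1) :
    dH (t • (1 : Matrix (Fin n) (Fin n) ℝ)) ((2⁻¹ : ℝ) • 1) = Real.log (t / (1 - t)) := by
  have hA : ((2⁻¹ : ℝ) • (1 : Matrix (Fin n) (Fin n) ℝ))⁻¹ * (t • 1) = (2 * t) • 1 := by
    rw [aux_smul_one_inv (by norm_num), aux_smul_one_mul, inv_inv]
  have hB : (1 - (2⁻¹ : ℝ) • (1 : Matrix (Fin n) (Fin n) ℝ))⁻¹ * (1 - t • 1)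
      = (2 * (1 - t)) • 1 := by
    rw [aux_one_sub_smul_one, aux_one_sub_smul_one, aux_smul_one_inv (by norm_num),
      aux_smul_one_mul]
    norm_num
  rw [dH, hA, hB, aux_lmax_smul_one hn, aux_lmax_smul_one hn, aux_lmin_smul_one hn,
    aux_lmin_smul_one hn]
  have h1 : 2 * (1 - t) < 2 * t := by linarith
  rw [max_eq_left h1.le, min_eq_right h1.le]
  congr 1
  rw [mul_div_mul_left _ _ (by norm_num : (2:ℝ) ≠ 0)]

lemma aux_dAIRM_scalar {n : ℕ} (hn : 1 ≤ n) {p q : ℝ} (hp : 0 < p) (hq : 0 < q)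
    (h1 : (p • (1 : Matrix (Fin n) (Fin n) ℝ)).PosDef)
    (h2 : (q • (1 : Matrix (Fin n) (Fin n) ℝ)).PosDef) :
    dAIRM h1 h2 = Real.sqrt n * |Real.log (p / q)| := by
  have hM : (h2.posSemidef.sqrt)⁻¹ * (p • 1) * (h2.posSemidef.sqrt)⁻¹
      = (p / q) • (1 : Matrix (Fin n) (Fin n) ℝ) := by
    have hne : Real.sqrt q ≠ 0 := ne_of_gt (Real.sqrt_pos.mpr hq)
    rw [aux_sqrt_smul_one hq.le, aux_smul_one_inv hne, aux_smul_one_mul, aux_smul_one_mul]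
    congr 1
    have : (Real.sqrt q)⁻¹ * p * (Real.sqrt q)⁻¹ = p / (Real.sqrt q * Real.sqrt q) := by
      field_simp
    rw [this, Real.mul_self_sqrt hq.le]
  rw [dAIRM]
  have heig : ∀ i : Fin n, (isHermitian_conj h2.posSemidef.posSemidef_sqrt.isHermitian.inv
      h1.isHermitian).eigenvalues i = p / q := fun i => aux_eig_scalar hn _ hM i
  rw [Finset.sum_congr rfl fun i _ => by rw [heig i]]
  rw [Finset.sum_const, Finset.card_univ, Fintype.card_fin, nsmul_eq_mul,
    Real.sqrt_mul (by positivity), Real.sqrt_sq_eq_abs]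

/-- For every `n ≥ 1` there is no constant `κ > 0` with
`d_H(X,Y) ≤ κ · d_AIRM(X,Y)` for all `X, Y ∈ VPM°(n)`. -/
theorem no_upper_bound_by_restricted_airm {n : ℕ} (hn : 1 ≤ n) :
    ¬ ∃ κ : ℝ, 0 < κ ∧
      ∀ (X Y : Matrix (Fin n) (Fin n) ℝ) (hX : X ∈ VPM n) (hY : Y ∈ VPM n),
        dH X Y ≤ κ * dAIRM hX.1 hY.1 := by
  rintro ⟨κ, hκ, hbound⟩
  set M : ℝ := κ * Real.sqrt n * Real.log 2 + 1 with hMdef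
  have hM1 : 1 ≤ M := by
    have : 0 ≤ κ * Real.sqrt n * Real.log 2 := by positivity
    linarith
  set u : ℝ := Real.exp M with hudef
  have hu1 : 1 < u := by
    calc (1:ℝ) < Real.exp 1 := by simpa using Real.one_lt_exp_iff_of_nonneg (le_refl 1) |>.mpr one_pos
    _ ≤ u := Real.exp_le_exp.mpr hM1
  have hu0 : 0 < u := by linarith
  set t : ℝ := u / (u + 1) with htdef
  have hden : (0:ℝ) < u + 1 := by linarith
  have ht1 : 1 / 2 < t := by
    rw [htdef, div_lt_div_iff₀ (by norm_num) hden]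
    linarith
  have ht2 : t < 1 := by
    rw [htdef, div_lt_one hden]; linarith
  have ht0 : 0 < t := by linarith
  have hX : (t • (1 : Matrix (Fin n) (Fin n) ℝ)) ∈ VPM n := by
    refine ⟨aux_posDef_smul_one ht0, ?_⟩
    rw [aux_one_sub_smul_one]
    exact aux_posDef_smul_one (by linarith)
  have hY : ((2⁻¹ : ℝ) • (1 : Matrix (Fin n) (Fin n) ℝ)) ∈ VPM n := by
    refine ⟨aux_posDef_smul_one (by norm_num), ?_⟩
    rw [aux_one_sub_smul_one]
    exact aux_posDef_smul_one (by norm_num)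
  have hb := hbound _ _ hX hY
  rw [aux_dH_scalar hn ht1 ht2, aux_dAIRM_scalar hn ht0 (by norm_num)] at hb
  -- t / (1 - t) = u
  have h1t : 1 - t = 1 / (u + 1) := by
    rw [htdef]; field_simp; ring
  have hfrac : t / (1 - t) = u := by
    rw [h1t, htdef]; field_simp
  rw [hfrac, hudef, Real.log_exp] at hb
  -- bound the RHS
  have h2t : t / 2⁻¹ = 2 * t := by ring
  have hlog2t : |Real.log (t / 2⁻¹)| < Real.log 2 := by
    rw [h2t, abs_lt]
    have h2t1 : 1 < 2 * t := by linarith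
    have hlogpos := Real.log_pos h2t1
    have hlog2 : (0:ℝ) < Real.log 2 := Real.log_pos (by norm_num)
    exact ⟨by linarith, Real.log_lt_log (by linarith) (by linarith)⟩
  have hrhs : κ * (Real.sqrt n * |Real.log (t / 2⁻¹)|) < M := by
    have h0 : 0 ≤ Real.sqrt n := Real.sqrt_nonneg n
    have : κ * (Real.sqrt n * |Real.log (t / 2⁻¹)|) ≤ κ * Real.sqrt n * Real.log 2 := by
      rw [mul_assoc]
      gcongr
    linarith
  linarith
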